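/- Let 𝐯 be a binary aperiodic uniformly recurrent sequence whose language is closed under the letter exchange E, and let 𝐮 = S(𝐯). For any non-empty factor v of 𝐯 beginning with 0 and with ind_𝐯(v) > 1, the word u = S(v0) is a stable factor of 𝐮 and satisfies ind_𝐮(u) + 1/|u| = ind_𝐯(v). -/

import Mathlib

/-- The first-difference map on binary words:
`S(v₀v₁⋯vₙ) = u₀⋯u_{n-1}` with `uᵢ = vᵢ + v_{i+1} (mod 2)`. -/
def Smap (v : List (ZMod 2)) : List (ZMod 2) :=
  (List.range (v.length - 1)).map fun i => v.getD i 0 + v.getD (i + 1) 0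

/-- `w` occurs in the sequence `u` at position `i`. -/
def OccursAt (u : ℕ → ZMod 2) (w : List (ZMod 2)) (i : ℕ) : Prop :=
  ∀ k < w.length, w[k]? = some (u (i + k))

/-- `w` is a factor of the sequence `u`. -/
def IsFactor (u : ℕ → ZMod 2) (w : List (ZMod 2)) : Prop :=
  ∃ i, OccursAt u w i

/-- `z` has fractional root `r`: `z` is a prefix of `r^ω`. -/
def HasRoot (z r : List (ZMod 2)) : Prop :=
  r ≠ [] ∧ ∀ k < z.length, z[k]? = r[k % r.length]?

/-- The index of `w` in `u`. -/
noncomputable def ind (u : ℕ → ZMod 2) (w : List (ZMod 2)) : EReal :=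
  sSup {e : EReal | ∃ z : List (ZMod 2), IsFactor u z ∧ HasRoot z w ∧
    e = (((z.length : ℝ) / (w.length : ℝ) : ℝ) : EReal)}

/-- The first-difference map on binary sequences. -/
def SSeq (v : ℕ → ZMod 2) : ℕ → ZMod 2 := fun i => v i + v (i + 1)

/-- `v` is uniformly recurrent: every factor occurs with bounded gaps. -/
def UniformlyRecurrent (v : ℕ → ZMod 2) : Prop :=
  ∀ w : List (ZMod 2), IsFactor v w →
    ∃ N, ∀ i, ∃ j, i ≤ j ∧ j < i + N ∧ OccursAt v w j

/-- `v` is aperiodic: not eventually periodic. -/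
def Aperiodic (v : ℕ → ZMod 2) : Prop :=
  ¬ ∃ p N, 0 < p ∧ ∀ i, N ≤ i → v (i + p) = v i

/-!
Writing `n = |x| = |S(x0)|`: if `z` is a factor of `v` that is a prefix of `x^ω`, then `S(z)` is a
factor of `S(v)` of length `|z| - 1` that is a prefix of `S(x0)^ω`, because `x0` ends with the
first letter of `x`. Conversely, a factor of `S(v)` of length `m` is `S` of exactly two words of
length `m + 1`, exchanged by `E`; both are factors of `v`, one of them begins with `0`, and that
one is a prefix of `x^ω`. So the lengths of the fractional powers of `x` in `v` are `0` and the
successors of those of `S(x0)` in `S(v)`, which shifts the supremum of `m / n` by `1 / n`.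
Stability holds because the letters of `S(w)` sum to the first plus the last letter of `w`.
-/

open Set

lemma getElem?_eq_some_getD {α : Type*} {l : List α} {k : ℕ} (d : α) (h : k < l.length) :
    l[k]? = some (l.getD k d) := by
  rw [List.getElem?_eq_getElem h, List.getD_eq_getElem l d h]

lemma getD_zero_of_head?_eq {α : Type*} {l : List α} {a : α} (d : α) (h : l.head? = some a) :
    l.getD 0 d = a := by
  rw [List.getD_eq_getElem?_getD, ← List.head?_eq_getElem?, h, Option.getD_some]

lemma ZMod.two_add_one_eq_of_ne {a b : ZMod 2} (h : a ≠ b) : a + 1 = b := by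
  revert a b h; decide

section Smap

lemma Smap_length (w : List (ZMod 2)) : (Smap w).length = w.length - 1 := by
  simp [Smap]

lemma Smap_append_singleton_length (x : List (ZMod 2)) (a : ZMod 2) :
    (Smap (x ++ [a])).length = x.length := by
  simp [Smap_length]

lemma Smap_getD (w : List (ZMod 2)) {j : ℕ} (h : j < w.length - 1) :
    (Smap w).getD j 0 = w.getD j 0 + w.getD (j + 1) 0 := by
  rw [List.getD_eq_getElem _ 0 (by rwa [Smap_length])]
  simp [Smap]

lemma Smap_map_add_one (z : List (ZMod 2)) : Smap (z.map (· + 1)) = Smap z := by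
  have hlen : (z.map (· + 1)).length = z.length := List.length_map _
  have hget : ∀ j < z.length, (z.map (· + 1)).getD j 0 = z.getD j 0 + 1 := fun j hj => by
    rw [List.getD_eq_getElem _ 0 (hlen ▸ hj), List.getD_eq_getElem _ 0 hj, List.getElem_map]
  unfold Smap
  rw [hlen]
  refine List.map_congr_left fun i hi => ?_
  rw [List.mem_range] at hi
  rw [hget i (by omega), hget (i + 1) (by omega), add_add_add_comm, CharTwo.add_self_eq_zero,
    add_zero]

lemma sum_range_map_add_succ {R : Type*} [Semiring R] [CharP R 2] (a : ℕ → R) (m : ℕ) :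
    ((List.range m).map fun i => a i + a (i + 1)).sum = a 0 + a m := by
  induction m with
  | zero => simp [CharTwo.add_self_eq_zero]
  | succ m ih =>
    rw [List.sum_range_succ, ih, add_assoc, ← add_assoc (a m), CharTwo.add_self_eq_zero, zero_add]

lemma sum_Smap (w : List (ZMod 2)) : (Smap w).sum = w.getD 0 0 + w.getD (w.length - 1) 0 :=
  sum_range_map_add_succ _ _

lemma count_one_cast_eq_sum (l : List (ZMod 2)) : (l.count 1 : ZMod 2) = l.sum := by
  induction l with
  | nil => simp
  | cons a l ih =>
    obtain rfl | rfl : a = 0 ∨ a = 1 := by revert a; decide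
    all_goals simp [← ih, add_comm]

lemma even_count_one_iff_sum_eq_zero (l : List (ZMod 2)) : Even (l.count 1) ↔ l.sum = 0 := by
  rw [← count_one_cast_eq_sum, even_iff_two_dvd, ← ZMod.natCast_eq_zero_iff]

lemma even_count_one_Smap_append {x : List (ZMod 2)} {a : ZMod 2} (ha : x.head? = some a) :
    Even ((Smap (x ++ [a])).count 1) := by
  obtain ⟨ys, rfl⟩ := List.head?_eq_some_iff.mp ha
  rw [even_count_one_iff_sum_eq_zero, sum_Smap]
  simp [CharTwo.add_self_eq_zero]

lemma Smap_append_getD_mod {x : List (ZMod 2)} {a : ZMod 2} (ha : x.head? = some a) (k : ℕ) :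
    (Smap (x ++ [a])).getD (k % x.length) 0
      = x.getD (k % x.length) 0 + x.getD ((k + 1) % x.length) 0 := by
  have hn : 0 < x.length := List.length_pos_iff.mpr (by rintro rfl; simp at ha)
  have hk : k % x.length < x.length := Nat.mod_lt _ hn
  rw [Smap_getD _ (by simpa using hk), List.getD_append _ _ _ _ hk]
  rcases Nat.lt_or_ge (k % x.length + 1) x.length with hlt | hge
  · have hmod : (k + 1) % x.length = k % x.length + 1 := by
      rw [← Nat.mod_add_mod, Nat.mod_eq_of_lt hlt]
    rw [hmod, List.getD_append _ _ _ _ hlt]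
  · have hlast : k % x.length + 1 = x.length := by omega
    have hmod : (k + 1) % x.length = 0 := by
      rw [← Nat.mod_add_mod, hlast, Nat.mod_self]
    rw [hmod, getD_zero_of_head?_eq _ ha, hlast, List.getD_append_right _ _ _ _ le_rfl]
    simp

end Smap

section Occurrences

variable {u : ℕ → ZMod 2}

lemma occursAt_iff_getD {w : List (ZMod 2)} {i : ℕ} :
    OccursAt u w i ↔ ∀ k < w.length, w.getD k 0 = u (i + k) := by
  refine forall₂_congr fun k hk => ?_
  rw [getElem?_eq_some_getD 0 hk, Option.some_inj]

lemma hasRoot_iff_getD {z r : List (ZMod 2)} (hr : r ≠ []) :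
    HasRoot z r ↔ ∀ k < z.length, z.getD k 0 = r.getD (k % r.length) 0 := by
  have hmod : ∀ k, k % r.length < r.length := fun k => Nat.mod_lt _ (List.length_pos_iff.mpr hr)
  refine (and_iff_right hr).trans (forall₂_congr fun k hk => ?_)
  rw [getElem?_eq_some_getD 0 hk, getElem?_eq_some_getD 0 (hmod k), Option.some_inj]

lemma OccursAt.Smap {w : List (ZMod 2)} {i : ℕ} (h : OccursAt u w i) :
    OccursAt (SSeq u) (Smap w) i := by
  rw [occursAt_iff_getD] at h ⊢
  intro k hk
  rw [Smap_length] at hk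
  rw [Smap_getD w hk, h k (by omega), h (k + 1) (by omega), SSeq, Nat.add_assoc]

lemma IsFactor.Smap {w : List (ZMod 2)} (h : IsFactor u w) : IsFactor (SSeq u) (Smap w) :=
  h.imp fun _ => OccursAt.Smap

lemma IsFactor.of_hasRoot {z w : List (ZMod 2)} (hz : IsFactor u z) (hr : HasRoot z w)
    (hlen : w.length ≤ z.length) : IsFactor u w := by
  obtain ⟨i, hi⟩ := hz
  refine ⟨i, occursAt_iff_getD.mpr fun k hk => ?_⟩
  rw [hasRoot_iff_getD hr.1] at hr
  rw [occursAt_iff_getD] at hi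
  rw [← hi k (by omega), hr k (by omega), Nat.mod_eq_of_lt hk]

lemma exists_occursAt_Smap_eq {v : ℕ → ZMod 2} {z' : List (ZMod 2)} {i : ℕ}
    (h : OccursAt (SSeq v) z' i) :
    ∃ z, OccursAt v z i ∧ z.head? = some (v i) ∧ Smap z = z' := by
  set z := List.ofFn fun k : Fin (z'.length + 1) => v (i + k)
  have hz : ∀ k < z'.length + 1, z.getD k 0 = v (i + k) := fun k hk => by
    rw [List.getD_eq_getElem _ 0 (by simpa [z] using hk), List.getElem_ofFn]
  refine ⟨z, occursAt_iff_getD.mpr fun k hk => hz k (by simpa [z] using hk), by simp [z], ?_⟩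
  rw [occursAt_iff_getD] at h
  refine List.ext_getElem (by simp [z, Smap_length]) fun j hj hj' => ?_
  rw [← List.getD_eq_getElem _ 0 hj, ← List.getD_eq_getElem _ 0 hj',
    Smap_getD _ (by simpa [z] using hj'), hz j (by omega), hz (j + 1) (by omega), h j hj', SSeq,
    Nat.add_assoc]

end Occurrences

section Roots

variable {x : List (ZMod 2)} {a : ZMod 2}

lemma Smap_append_ne_nil (ha : x.head? = some a) : Smap (x ++ [a]) ≠ [] := by
  rw [← List.length_pos_iff, Smap_append_singleton_length, List.length_pos_iff]
  rintro rfl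
  simp at ha

lemma HasRoot.Smap_append {z : List (ZMod 2)} (h : HasRoot z x) (ha : x.head? = some a) :
    HasRoot (Smap z) (Smap (x ++ [a])) := by
  rw [hasRoot_iff_getD h.1] at h
  rw [hasRoot_iff_getD (Smap_append_ne_nil ha), Smap_append_singleton_length]
  intro k hk
  rw [Smap_length] at hk
  rw [Smap_getD z hk, Smap_append_getD_mod ha, h k (by omega), h (k + 1) (by omega)]

lemma HasRoot.of_Smap_append {z : List (ZMod 2)} (h : HasRoot (Smap z) (Smap (x ++ [a])))
    (ha : x.head? = some a) (hz : z.head? = some a) : HasRoot z x := by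
  have hx : x ≠ [] := by rintro rfl; simp at ha
  rw [hasRoot_iff_getD (Smap_append_ne_nil ha), Smap_append_singleton_length] at h
  rw [hasRoot_iff_getD hx]
  intro k hk
  induction k with
  | zero => rw [getD_zero_of_head?_eq _ hz, Nat.zero_mod, getD_zero_of_head?_eq _ ha]
  | succ k ih =>
    have hstep := h k (by rw [Smap_length]; omega)
    rw [Smap_getD z (by omega), Smap_append_getD_mod ha, ih (by omega)] at hstep
    exact add_left_cancel hstep

end Roots

section RootLengths

variable {v : ℕ → ZMod 2}

lemma exists_isFactor_head?_eq_Smap_eq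
    (hE : ∀ w : List (ZMod 2), IsFactor v w → IsFactor v (w.map (· + 1)))
    {z' : List (ZMod 2)} (h : IsFactor (SSeq v) z') (a : ZMod 2) :
    ∃ z, IsFactor v z ∧ z.head? = some a ∧ Smap z = z' := by
  obtain ⟨i, hi⟩ := h
  obtain ⟨z, hz, hhead, rfl⟩ := exists_occursAt_Smap_eq hi
  by_cases hva : v i = a
  · exact ⟨z, ⟨i, hz⟩, hva ▸ hhead, rfl⟩
  · refine ⟨z.map (· + 1), hE z ⟨i, hz⟩, ?_, Smap_map_add_one z⟩
    rw [List.head?_map, hhead, Option.map_some, ZMod.two_add_one_eq_of_ne hva]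

def rootLengths (u : ℕ → ZMod 2) (w : List (ZMod 2)) : Set ℕ :=
  {m | ∃ z, IsFactor u z ∧ HasRoot z w ∧ z.length = m}

lemma ind_eq_sSup_rootLengths (u : ℕ → ZMod 2) (w : List (ZMod 2)) :
    ind u w = sSup ((fun m : ℕ => ((m / w.length : ℝ) : EReal)) '' rootLengths u w) := by
  unfold ind rootLengths
  congr 1
  ext e
  constructor
  · rintro ⟨z, hz, hr, rfl⟩
    exact ⟨z.length, ⟨z, hz, hr, rfl⟩, rfl⟩
  · rintro ⟨_, ⟨z, hz, hr, rfl⟩, rfl⟩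
    exact ⟨z, hz, hr, rfl⟩

lemma zero_mem_rootLengths (u : ℕ → ZMod 2) {w : List (ZMod 2)} (hw : w ≠ []) :
    0 ∈ rootLengths u w :=
  ⟨[], ⟨0, by simp [OccursAt]⟩, ⟨hw, by simp⟩, rfl⟩

lemma exists_mem_rootLengths_length_lt {u : ℕ → ZMod 2} {w : List (ZMod 2)}
    (h : 1 < ind u w) : ∃ m ∈ rootLengths u w, w.length < m := by
  rw [ind_eq_sSup_rootLengths, lt_sSup_iff] at h
  obtain ⟨_, ⟨m, hm, rfl⟩, hlt⟩ := h
  refine ⟨m, hm, ?_⟩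
  rw [← EReal.coe_one, EReal.coe_lt_coe_iff] at hlt
  by_contra! hle
  exact hlt.not_ge (div_le_one_of_le₀ (by exact_mod_cast hle) (Nat.cast_nonneg _))

lemma IsFactor.of_mem_rootLengths {u : ℕ → ZMod 2} {w : List (ZMod 2)} {m : ℕ}
    (hm : m ∈ rootLengths u w) (hle : w.length ≤ m) : IsFactor u w := by
  obtain ⟨z, hz, hr, rfl⟩ := hm
  exact hz.of_hasRoot hr hle

lemma succ_mem_rootLengths_iff
    (hE : ∀ w : List (ZMod 2), IsFactor v w → IsFactor v (w.map (· + 1)))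
    {x : List (ZMod 2)} {a : ZMod 2} (ha : x.head? = some a) (m : ℕ) :
    m + 1 ∈ rootLengths v x ↔ m ∈ rootLengths (SSeq v) (Smap (x ++ [a])) := by
  constructor
  · rintro ⟨z, hz, hr, hlen⟩
    exact ⟨Smap z, hz.Smap, hr.Smap_append ha, by rw [Smap_length, hlen, Nat.add_sub_cancel]⟩
  · rintro ⟨z', hz', hr', rfl⟩
    obtain ⟨z, hz, hhead, rfl⟩ := exists_isFactor_head?_eq_Smap_eq hE hz' a
    have hpos : 0 < z.length := List.length_pos_iff.mpr (by rintro rfl; simp at hhead)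
    exact ⟨z, hz, hr'.of_Smap_append ha hhead, by rw [Smap_length]; omega⟩

end RootLengths

lemma sSup_image_div_eq_add {L L' : Set ℕ} (h0 : 0 ∈ L') (hL : ∀ m, m + 1 ∈ L ↔ m ∈ L')
    {n : ℝ} (hn : 0 ≤ n) :
    sSup ((fun m : ℕ => ((m / n : ℝ) : EReal)) '' L)
      = sSup ((fun m : ℕ => ((m / n : ℝ) : EReal)) '' L') + ((1 / n : ℝ) : EReal) := by
  set f : ℕ → EReal := fun m => ((m / n : ℝ) : EReal)
  set c : EReal := ((1 / n : ℝ) : EReal)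
  have hsucc : ∀ m, f (m + 1) = f m + c := fun m => by
    simp only [f, c, ← EReal.coe_add, Nat.cast_succ, add_div]
  have hshift : sSup (f '' L') + c = sSup ((· + c) '' (f '' L')) :=
    Monotone.map_sSup_of_continuousAt
      ((EReal.continuousAt_add (Or.inr (EReal.coe_ne_bot _)) (Or.inr (EReal.coe_ne_top _))).comp
        (f := fun y => (y, c)) (continuousAt_id.prodMk continuousAt_const))
      (fun _ _ h => add_le_add_left h c) (EReal.bot_add c)
  rw [hshift, image_image]
  apply le_antisymm
  · refine sSup_le ?_
    rintro _ ⟨_ | m, hm, rfl⟩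
    · refine le_sSup_of_le (mem_image_of_mem _ h0) ?_
      simp only [f, c, CharP.cast_eq_zero, zero_div, EReal.coe_zero, zero_add]
      exact EReal.coe_nonneg.mpr (by positivity)
    · exact le_sSup ⟨m, (hL m).mp hm, (hsucc m).symm⟩
  · refine sSup_le_sSup ?_
    rintro _ ⟨m, hm, rfl⟩
    exact ⟨m + 1, (hL m).mpr hm, hsucc m⟩

theorem ind_Smap_relation_general (v : ℕ → ZMod 2)
    (hE : ∀ w : List (ZMod 2), IsFactor v w → IsFactor v (w.map (· + 1)))
    (x : List (ZMod 2)) (hx0 : x.head? = some 0)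
    (hind : (1 : EReal) < ind v x) :
    Even ((Smap (x ++ [0])).count 1) ∧
    IsFactor (SSeq v) (Smap (x ++ [0])) ∧
    ind (SSeq v) (Smap (x ++ [0])) +
      (((1 : ℝ) / ((Smap (x ++ [0])).length : ℝ) : ℝ) : EReal) = ind v x := by
  have hlen := Smap_append_singleton_length x 0
  have hsucc := succ_mem_rootLengths_iff hE hx0
  refine ⟨even_count_one_Smap_append hx0, ?_, ?_⟩
  · obtain ⟨_ | m, hm, hlt⟩ := exists_mem_rootLengths_length_lt hind
    · omega
    · exact IsFactor.of_mem_rootLengths ((hsucc m).mp hm) (by omega)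
  · rw [ind_eq_sSup_rootLengths, ind_eq_sSup_rootLengths, hlen]
    exact (sSup_image_div_eq_add (zero_mem_rootLengths _ (Smap_append_ne_nil hx0)) hsucc
      (Nat.cast_nonneg _)).symm

/-- For a binary aperiodic uniformly recurrent sequence `v` whose language is
closed under the exchange of letters, any non-empty factor `x` beginning with
`0` with `ind(x) > 1` satisfies: `u = S(x0)` is a stable factor of `S(v)` with
`ind(u) + 1/|u| = ind(x)`. -/
theorem ind_Smap_relation (v : ℕ → ZMod 2)
    (hap : Aperiodic v) (hur : UniformlyRecurrent v)
    (hE : ∀ w : List (ZMod 2), IsFactor v w → IsFactor v (w.map (· + 1)))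
    (x : List (ZMod 2)) (hx : x ≠ []) (hx0 : x.head? = some 0)
    (hxf : IsFactor v x) (hind : (1 : EReal) < ind v x) :
    Even ((Smap (x ++ [0])).count 1) ∧
    IsFactor (SSeq v) (Smap (x ++ [0])) ∧
    ind (SSeq v) (Smap (x ++ [0])) +
      (((1 : ℝ) / ((Smap (x ++ [0])).length : ℝ) : ℝ) : EReal) = ind v x :=
  ind_Smap_relation_general v hE x hx0 hind
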